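/- Pathwise domination of the buy-and-hold hedge before cancellation: let J = { i : A_i < ∞ }, let T > 0, and let s : [0,T] → ℝ^d_+ be a continuous path with Σ_{i∈J} s_i(0)/A_i < 1. Then for every t ∈ [0,T] such that F(0) + ⟨B, s(u)⟩ < F(s(u)) + Δ for all u ∈ [0,t), one has F(0) + ⟨B, s(t)⟩ ≥ F(s(t)). -/

import Mathlib

open Set
open scoped Classical

noncomputable section

/-- The nonnegative orthant of `ℝ^d` (with the Euclidean structure). -/
def orthant (d : ℕ) : Set (EuclideanSpace ℝ (Fin d)) := {x | ∀ i, 0 ≤ x i}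

/-- The subdifferential (set of subgradients) of a function `φ : ℝ₊ → ℝ` at a point `t`. -/
def subdiff (φ : ℝ → ℝ) (t : ℝ) : Set ℝ :=
  {v | ∀ s : ℝ, 0 ≤ s → φ t + v * (s - t) ≤ φ s}

/-- `Fi F i t = F (t • e_i)`, the restriction of `F` to the `i`-th coordinate axis. -/
def Fi {d : ℕ} (F : EuclideanSpace ℝ (Fin d) → ℝ) (i : Fin d) (t : ℝ) : ℝ :=
  F (t • EuclideanSpace.single i (1 : ℝ))

/-- The set `{t > 0 : (F_i(t) + Δ - F(0))/t ∈ ∂F_i(t)}` defining `A_i`. -/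
def setA {d : ℕ} (F : EuclideanSpace ℝ (Fin d) → ℝ) (Δ : ℝ) (i : Fin d) : Set ℝ :=
  {t | 0 < t ∧ (Fi F i t + Δ - F 0) / t ∈ subdiff (Fi F i) t}

/-- `A_i` (finite value; `A_i = ∞` corresponds to `setA F Δ i` being empty). -/
def Avar {d : ℕ} (F : EuclideanSpace ℝ (Fin d) → ℝ) (Δ : ℝ) (i : Fin d) : ℝ :=
  sInf (setA F Δ i)

/-- `B_i = (F_i(A_i) + Δ - F(0))/A_i` if `A_i < ∞`, and
`B_i = sup ⋃_{t>0} ∂F_i(t)` otherwise. -/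
def Bvar {d : ℕ} (F : EuclideanSpace ℝ (Fin d) → ℝ) (Δ : ℝ) (i : Fin d) : ℝ :=
  if (setA F Δ i).Nonempty then (Fi F i (Avar F Δ i) + Δ - F 0) / Avar F Δ i
  else sSup (⋃ t ∈ Ioi (0 : ℝ), subdiff (Fi F i) t)

/-- The inner product `⟨B, x⟩`. -/
def Bdot {d : ℕ} (F : EuclideanSpace ℝ (Fin d) → ℝ) (Δ : ℝ)
    (x : EuclideanSpace ℝ (Fin d)) : ℝ :=
  ∑ i, Bvar F Δ i * x i

/-- The set `{t > 0 : F(0) + ⟨B, t·x/‖x‖⟩ ≥ Δ + F(t·x/‖x‖)}` defining `H(x)`. -/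
def setH {d : ℕ} (F : EuclideanSpace ℝ (Fin d) → ℝ) (Δ : ℝ)
    (x : EuclideanSpace ℝ (Fin d)) : Set ℝ :=
  {t | 0 < t ∧ Δ + F ((t / ‖x‖) • x) ≤ F 0 + Bdot F Δ ((t / ‖x‖) • x)}

/-- The game analogue `R` of the concave envelope: `R(0) = F(0)`; for `x ≠ 0`,
`R(x) = F(x) + Δ` if `‖x‖ ≥ H(x)` (i.e. `setH F Δ x` is nonempty with `sInf ≤ ‖x‖`),
and `R(x) = F(0) + ⟨B, x⟩` if `‖x‖ < H(x)`. -/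
def Rfun {d : ℕ} (F : EuclideanSpace ℝ (Fin d) → ℝ) (Δ : ℝ)
    (x : EuclideanSpace ℝ (Fin d)) : ℝ :=
  if x = 0 then F 0
  else if (setH F Δ x).Nonempty ∧ sInf (setH F Δ x) ≤ ‖x‖ then F x + Δ
  else F 0 + Bdot F Δ x

/-- Membership in the class `𝒢`: `f : ℝ^d₊ → ℝ₊` continuous, `F ≤ f ≤ F + Δ`, and `f`
is concave on every convex subset `D` of the orthant on which `f < F + Δ`. -/
def memG {d : ℕ} (F : EuclideanSpace ℝ (Fin d) → ℝ) (Δ : ℝ)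
    (f : EuclideanSpace ℝ (Fin d) → ℝ) : Prop :=
  ContinuousOn f (orthant d) ∧
  (∀ x ∈ orthant d, 0 ≤ f x) ∧
  (∀ x ∈ orthant d, F x ≤ f x ∧ f x ≤ F x + Δ) ∧
  (∀ D : Set (EuclideanSpace ℝ (Fin d)), D ⊆ orthant d → Convex ℝ D →
    (∀ x ∈ D, f x < F x + Δ) → ConcaveOn ℝ D f)


/-!
For `i ∉ J` every subgradient of `F_i` is at most `B_i`, so `F_i(r) ≤ F(0) + B_i r` for all
`r ≥ 0`; for `i ∈ J` the definition of `B_i` says `F_i(A_i) = F(0) + B_i A_i - Δ`. Writing `x` as a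
convex combination of `0`, the points `A_i e_i` (`i ∈ J`) and far-out points `M e_i` (`i ∉ J`),
convexity of `F` gives `F(x) ≤ F(0) + ⟨B, x⟩ - Δ Σ_{i∈J} x_i / A_i` whenever
`Σ_{i∈J} x_i / A_i < 1`, and by continuity also when the sum equals `1`. Along the path the sum
starts below `1`; were it above `1` at time `t`, it would equal `1` at some earlier time `u` by the
intermediate value theorem, and there the bound contradicts `F(0) + ⟨B, s(u)⟩ < F(s(u)) + Δ`.
-/

open Finset Filter Topology

section Subdifferential

variable {φ : ℝ → ℝ} {t v : ℝ}

lemma rightDeriv_mem_subdiff (hφ : ConvexOn ℝ (Ici 0) φ) (ht : 0 < t) :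
    derivWithin φ (Ioi t) t ∈ subdiff φ t := by
  have hint : t ∈ interior (Ici (0 : ℝ)) := by rwa [interior_Ici]
  intro r hr
  rcases lt_trichotomy r t with hrt | rfl | htr
  · have h := (hφ.slope_le_leftDeriv_of_mem_interior hr hint hrt).trans
      (hφ.leftDeriv_le_rightDeriv_of_mem_interior hint)
    rw [slope_def_field, div_le_iff₀ (sub_pos.2 hrt)] at h
    linarith
  · simp
  · have h := hφ.rightDeriv_le_slope_of_mem_interior hint hr htr
    rw [slope_def_field, le_div_iff₀ (sub_pos.2 htr)] at h
    linarith

lemma le_of_mem_subdiff {L : NNReal} (hφ : LipschitzOnWith L φ (Ici 0)) (ht : 0 ≤ t)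
    (hv : v ∈ subdiff φ t) : v ≤ L := by
  have hsub := hv (t + 1) (by linarith)
  have hlip := hφ.dist_le_mul (t + 1) (Set.mem_Ici.2 (by linarith)) t ht
  rw [Real.dist_eq, Real.dist_eq, add_sub_cancel_left, abs_one, mul_one] at hlip
  linarith [le_abs_self (φ (t + 1) - φ t)]

lemma le_two_mul_of_slope_mem_subdiff {L : NNReal} {Δ : ℝ} (hφ : LipschitzOnWith L φ (Ici 0))
    (ht : 0 < t) (hA : (φ t + Δ - φ 0) / t ∈ subdiff φ t) : Δ ≤ 2 * L * t := by
  have hslope := (div_le_iff₀ ht).1 (le_of_mem_subdiff hφ ht.le hA)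
  have hlip := hφ.dist_le_mul 0 (Set.mem_Ici.2 le_rfl) t ht.le
  rw [Real.dist_eq, Real.dist_eq, zero_sub, abs_neg, abs_of_pos ht] at hlip
  linarith [le_abs_self (φ 0 - φ t)]

end Subdifferential

section Axes

variable {d : ℕ} {F : EuclideanSpace ℝ (Fin d) → ℝ} {L : NNReal}

lemma smul_single_mem_orthant (i : Fin d) {t : ℝ} (ht : 0 ≤ t) :
    t • EuclideanSpace.single i (1 : ℝ) ∈ orthant d := by
  intro j
  by_cases h : j = i <;> simp [h, ht]

lemma Fi_zero (i : Fin d) : Fi F i 0 = F 0 := by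
  simp [Fi]

lemma convexOn_Fi (hF : ConvexOn ℝ (orthant d) F) (i : Fin d) :
    ConvexOn ℝ (Ici 0) (Fi F i) :=
  (hF.comp_linearMap (LinearMap.toSpanSingleton ℝ _ (EuclideanSpace.single i 1))).subset
    (fun _ ht => smul_single_mem_orthant i ht) (convex_Ici 0)

lemma lipschitzOnWith_Fi (hF : LipschitzOnWith L F (orthant d)) (i : Fin d) :
    LipschitzOnWith L (Fi F i) (Ici 0) := by
  have hline : LipschitzWith 1 fun t : ℝ => t • EuclideanSpace.single i (1 : ℝ) :=
    LipschitzWith.of_dist_le_mul fun a b => by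
      simp [dist_eq_norm, ← sub_smul, norm_smul]
  have h := hF.comp hline.lipschitzOnWith fun _ ht => smul_single_mem_orthant i ht
  rwa [mul_one] at h

variable (Δ : ℝ) {i : Fin d}

lemma Avar_pos (hΔ : 0 < Δ) (hF : LipschitzOnWith L F (orthant d))
    (hi : (setA F Δ i).Nonempty) : 0 < Avar F Δ i := by
  have hbound : ∀ t ∈ setA F Δ i, Δ ≤ 2 * L * t := fun t ⟨ht, hsub⟩ =>
    le_two_mul_of_slope_mem_subdiff (lipschitzOnWith_Fi hF i) ht (by rwa [Fi_zero])
  obtain ⟨t₀, ht₀⟩ := hi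
  have hL : (0 : ℝ) < L := by nlinarith [hbound t₀ ht₀, ht₀.1, L.coe_nonneg]
  have hlow : Δ / (2 * L) ≤ Avar F Δ i :=
    le_csInf ⟨t₀, ht₀⟩ fun t ht => (div_le_iff₀ (by positivity)).2 (by linarith [hbound t ht])
  exact (div_pos hΔ (by positivity)).trans_le hlow

lemma Fi_Avar_eq (hi : (setA F Δ i).Nonempty) (hA : 0 < Avar F Δ i) :
    Fi F i (Avar F Δ i) = F 0 - Δ + Bvar F Δ i * Avar F Δ i := by
  rw [Bvar, if_pos hi, div_mul_cancel₀ _ hA.ne']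
  ring

lemma Fi_le_add_Bvar_mul (hFc : ConvexOn ℝ (orthant d) F)
    (hFl : LipschitzOnWith L F (orthant d)) (hi : ¬ (setA F Δ i).Nonempty) {r : ℝ}
    (hr : 0 ≤ r) : Fi F i r ≤ F 0 + Bvar F Δ i * r := by
  rcases hr.eq_or_lt with rfl | hr
  · simp [Fi_zero]
  have hv := rightDeriv_mem_subdiff (convexOn_Fi hFc i) hr
  have hbdd : BddAbove (⋃ t ∈ Ioi (0 : ℝ), subdiff (Fi F i) t) :=
    ⟨L, fun _ hu => by
      obtain ⟨t, ht, hut⟩ := mem_iUnion₂.1 hu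
      exact le_of_mem_subdiff (lipschitzOnWith_Fi hFl i) (le_of_lt ht) hut⟩
  have hvB : derivWithin (Fi F i) (Ioi r) r ≤ Bvar F Δ i := by
    rw [Bvar, if_neg hi]
    exact le_csSup hbdd (mem_iUnion₂.2 ⟨r, hr, hv⟩)
  have hzero := hv 0 le_rfl
  rw [Fi_zero] at hzero
  linarith [mul_le_mul_of_nonneg_right hvB hr.le]

end Axes

lemma ConvexOn.map_le_axis_interpolation {d : ℕ} {F : EuclideanSpace ℝ (Fin d) → ℝ}
    (hF : ConvexOn ℝ (orthant d) F) {q : Fin d → ℝ} (hq : ∀ i, 0 < q i)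
    {x : EuclideanSpace ℝ (Fin d)} (hx : x ∈ orthant d) (hsum : ∑ i, x i / q i ≤ 1) :
    F x ≤ (1 - ∑ i, x i / q i) * F 0 + ∑ i, x i / q i * Fi F i (q i) := by
  have hcomb : ∑ i, (x i / q i) • q i • EuclideanSpace.single i (1 : ℝ) = x := by
    simp_rw [smul_smul, div_mul_cancel₀ _ (hq _).ne']
    simpa using (EuclideanSpace.basisFun (Fin d) ℝ).sum_repr x
  have h := hF.map_add_sum_le (t := univ) (q := 0) (fun i _ => div_nonneg (hx i) (hq i).le)
    (by ring) (fun i _ => smul_single_mem_orthant i (hq i).le) (sub_nonneg.2 hsum)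
    (fun _ => le_rfl)
  simp only [smul_zero, zero_add, hcomb, smul_eq_mul] at h
  exact h

section BuyAndHold

variable {d : ℕ} (F : EuclideanSpace ℝ (Fin d) → ℝ) (Δ : ℝ)

def axisRatio (x : EuclideanSpace ℝ (Fin d)) : ℝ :=
  ∑ i ∈ univ.filter (fun i => (setA F Δ i).Nonempty), x i / Avar F Δ i

lemma continuous_axisRatio : Continuous (axisRatio F Δ) := by
  unfold axisRatio
  fun_prop

lemma axisRatio_smul (c : ℝ) (x : EuclideanSpace ℝ (Fin d)) :
    axisRatio F Δ (c • x) = c * axisRatio F Δ x := by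
  simp only [axisRatio, mul_sum, PiLp.smul_apply, smul_eq_mul, mul_div_assoc]

lemma Bdot_smul (c : ℝ) (x : EuclideanSpace ℝ (Fin d)) :
    Bdot F Δ (c • x) = c * Bdot F Δ x := by
  simp only [Bdot, mul_sum, PiLp.smul_apply, smul_eq_mul, mul_left_comm]

variable {F Δ} {L : NNReal}

lemma axisRatio_nonneg (hΔ : 0 < Δ) (hFl : LipschitzOnWith L F (orthant d))
    {x : EuclideanSpace ℝ (Fin d)} (hx : x ∈ orthant d) : 0 ≤ axisRatio F Δ x :=
  sum_nonneg fun i hi => div_nonneg (hx i) (Avar_pos Δ hΔ hFl (mem_filter.1 hi).2).le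

lemma le_Bdot_sub_of_axisRatio_lt_one (hΔ : 0 < Δ) (hFc : ConvexOn ℝ (orthant d) F)
    (hFl : LipschitzOnWith L F (orthant d)) {x : EuclideanSpace ℝ (Fin d)} (hx : x ∈ orthant d)
    (hg : axisRatio F Δ x < 1) :
    F x ≤ F 0 + Bdot F Δ x - Δ * axisRatio F Δ x := by
  set S := ∑ i ∈ univ.filter (fun i => ¬ (setA F Δ i).Nonempty), x i
  have hS : 0 ≤ S := sum_nonneg fun i _ => hx i
  have hg' : 0 < 1 - axisRatio F Δ x := sub_pos.2 hg
  -- the points `M e_i`, `i ∉ J`, lie far enough out to leave room for the weights of `0` and `J`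
  set M := S / (1 - axisRatio F Δ x) + 1 with hM_def
  have hM : 0 < M := by positivity
  set q : Fin d → ℝ := fun i => if (setA F Δ i).Nonempty then Avar F Δ i else M
  have hq : ∀ i, 0 < q i := fun i => by
    by_cases hi : (setA F Δ i).Nonempty
    · simpa [q, hi] using Avar_pos Δ hΔ hFl hi
    · simpa [q, hi] using hM
  have hweights : ∑ i, x i / q i ≤ 1 := by
    have hsplit : ∑ i, x i / q i = axisRatio F Δ x + S / M := by
      rw [sum_congr rfl fun i _ => apply_ite (x i / ·) _ _ _, sum_ite, sum_div]
      rfl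
    have hSM : S / M ≤ 1 - axisRatio F Δ x := by
      rw [div_le_iff₀ hM, hM_def, mul_add, mul_div_cancel₀ _ hg'.ne']
      linarith
    linarith
  have hterm : ∀ i, x i / q i * Fi F i (q i) ≤ x i / q i * F 0 + Bvar F Δ i * x i
      - Δ * (if (setA F Δ i).Nonempty then x i / Avar F Δ i else 0) := fun i => by
    by_cases hi : (setA F Δ i).Nonempty
    · have hA := Avar_pos Δ hΔ hFl hi
      simp only [q, if_pos hi, Fi_Avar_eq Δ hi hA]
      exact le_of_eq (by field_simp; ring)
    · simp only [q, if_neg hi, mul_zero, sub_zero]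
      have h := mul_le_mul_of_nonneg_left (Fi_le_add_Bvar_mul Δ hFc hFl hi hM.le)
        (div_nonneg (hx i) hM.le)
      have hcancel : x i / M * (Bvar F Δ i * M) = Bvar F Δ i * x i := by field_simp
      linarith
  have hsum := Finset.sum_le_sum (s := Finset.univ) fun i _ => hterm i
  rw [sum_sub_distrib, sum_add_distrib, ← sum_mul, ← mul_sum, ← sum_filter] at hsum
  have := hFc.map_le_axis_interpolation hq hx hweights
  unfold Bdot axisRatio
  linarith

lemma le_Bdot_sub_of_axisRatio_le_one (hΔ : 0 < Δ) (hFc : ConvexOn ℝ (orthant d) F)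
    (hFl : LipschitzOnWith L F (orthant d)) {x : EuclideanSpace ℝ (Fin d)} (hx : x ∈ orthant d)
    (hg : axisRatio F Δ x ≤ 1) :
    F x ≤ F 0 + Bdot F Δ x - Δ * axisRatio F Δ x := by
  have hθ : ∀ θ ∈ Ioo (0 : ℝ) 1, θ • x ∈ orthant d := fun θ hθ j =>
    mul_nonneg hθ.1.le (hx j)
  have hbound : ∀ θ ∈ Ioo (0 : ℝ) 1,
      F (θ • x) ≤ F 0 + θ * (Bdot F Δ x - Δ * axisRatio F Δ x) := fun θ hθ' => by
    have h := le_Bdot_sub_of_axisRatio_lt_one hΔ hFc hFl (hθ θ hθ') (by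
      rw [axisRatio_smul]; nlinarith [hθ'.1, hθ'.2])
    rw [axisRatio_smul, Bdot_smul] at h
    linarith
  have hline : Tendsto (fun θ : ℝ => θ • x) (𝓝[<] 1) (𝓝[orthant d] x) := by
    refine tendsto_nhdsWithin_iff.2 ⟨?_, ?_⟩
    · have hcont : Continuous fun θ : ℝ => θ • x := continuous_id.smul continuous_const
      exact (hcont.tendsto' 1 x (one_smul ℝ x)).mono_left nhdsWithin_le_nhds
    · filter_upwards [Ioo_mem_nhdsLT zero_lt_one] using hθ
  have hlhs := (hFl.continuousOn x hx).tendsto.comp hline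
  have hrhs : Tendsto (fun θ : ℝ => F 0 + θ * (Bdot F Δ x - Δ * axisRatio F Δ x)) (𝓝[<] 1)
      (𝓝 (F 0 + 1 * (Bdot F Δ x - Δ * axisRatio F Δ x))) :=
    ((continuous_const.add (continuous_id.mul continuous_const)).tendsto 1).mono_left
      nhdsWithin_le_nhds
  have := le_of_tendsto_of_tendsto hlhs hrhs
    (eventually_of_mem (Ioo_mem_nhdsLT zero_lt_one) hbound)
  linarith

end BuyAndHold

theorem buy_and_hold_dominates_general {d : ℕ} (Δ : ℝ) (hΔ : 0 < Δ)
    (F : EuclideanSpace ℝ (Fin d) → ℝ)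
    (hFconv : ConvexOn ℝ (orthant d) F)
    (L : NNReal) (hFlip : LipschitzOnWith L F (orthant d))
    (T : ℝ) (s : ℝ → EuclideanSpace ℝ (Fin d))
    (hscont : ContinuousOn s (Icc 0 T))
    (hsval : ∀ t ∈ Icc (0 : ℝ) T, s t ∈ orthant d)
    (h0 : ∑ i ∈ Finset.univ.filter (fun i => (setA F Δ i).Nonempty),
      s 0 i / Avar F Δ i < 1)
    (t : ℝ) (ht : t ∈ Icc (0 : ℝ) T)
    (hpre : ∀ u ∈ Ico (0 : ℝ) t, F 0 + Bdot F Δ (s u) < F (s u) + Δ) :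
    F (s t) ≤ F 0 + Bdot F Δ (s t) := by
  have hratio : ContinuousOn (fun u => axisRatio F Δ (s u)) (Icc 0 t) :=
    (continuous_axisRatio F Δ).comp_continuousOn (hscont.mono (Icc_subset_Icc_right ht.2))
  have hst : axisRatio F Δ (s t) ≤ 1 := by
    by_contra! hgt
    obtain ⟨u, hu, hu1 : axisRatio F Δ (s u) = 1⟩ :=
      intermediate_value_Icc ht.1 hratio ⟨h0.le, hgt.le⟩
    have hut : u < t := hu.2.lt_of_ne (by rintro rfl; exact hgt.ne' hu1)
    have hbound := le_Bdot_sub_of_axisRatio_le_one hΔ hFconv hFlip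
      (hsval u ⟨hu.1, hu.2.trans ht.2⟩) hu1.le
    rw [hu1] at hbound
    linarith [hpre u ⟨hu.1, hut⟩]
  have hbound := le_Bdot_sub_of_axisRatio_le_one hΔ hFconv hFlip (hsval t ht) hst
  linarith [mul_nonneg hΔ.le (axisRatio_nonneg hΔ hFlip (hsval t ht))]

/-- Pathwise domination of the buy-and-hold hedge before cancellation: if `s` is a
continuous path in the nonnegative orthant with `Σ_{i ∈ J} s_i(0)/A_i < 1`
(where `J = {i : A_i < ∞}`), then for every `t ∈ [0, T]` such that
`F(0) + ⟨B, s(u)⟩ < F(s(u)) + Δ` for all `u ∈ [0, t)`, one has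
`F(0) + ⟨B, s(t)⟩ ≥ F(s(t))`. -/
theorem buy_and_hold_dominates {d : ℕ} (hd : 0 < d) (Δ : ℝ) (hΔ : 0 < Δ)
    (F : EuclideanSpace ℝ (Fin d) → ℝ)
    (hF0 : ∀ x ∈ orthant d, 0 ≤ F x)
    (hFconv : ConvexOn ℝ (orthant d) F)
    (L : NNReal) (hFlip : LipschitzOnWith L F (orthant d))
    (T : ℝ) (hT : 0 < T) (s : ℝ → EuclideanSpace ℝ (Fin d))
    (hscont : ContinuousOn s (Icc 0 T))
    (hsval : ∀ t ∈ Icc (0 : ℝ) T, s t ∈ orthant d)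
    (h0 : ∑ i ∈ Finset.univ.filter (fun i => (setA F Δ i).Nonempty),
      s 0 i / Avar F Δ i < 1)
    (t : ℝ) (ht : t ∈ Icc (0 : ℝ) T)
    (hpre : ∀ u ∈ Ico (0 : ℝ) t, F 0 + Bdot F Δ (s u) < F (s u) + Δ) :
    F (s t) ≤ F 0 + Bdot F Δ (s t) :=
  buy_and_hold_dominates_general Δ hΔ F hFconv L hFlip T s hscont hsval h0 t ht hpre

end
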